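/- Let U be a finite universe and 𝒮 a finite family of subsets of U with a designated element function, constructed as 𝒮' = 𝒮 ∪ {S'} where every set in 𝒮 that is required even is replaced by its symmetric difference with a fixed odd set S_o ∈ 𝒮. If T ⊆ U hits every odd set of the original instance an odd number of times and every even set an even number of times, then T hits every set of 𝒮' an odd number of times; conversely any T' hitting every set of 𝒮' an odd number of times hits every original odd set an odd number of times and every original even set an even number of times. In particular the minimum sizes of solutions of the two instances are equal. -/
import Mathlib

private lemma symmDiff_card_par {U : Type*} [DecidableEq U] (s t : Finset U) :
    (symmDiff s t).card % 2 = (s.card + t.card) % 2 := by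
  have h : symmDiff s t = (s \ t) ∪ (t \ s) := by
    ext x; simp [symmDiff_def]
  have hd : Disjoint (s \ t) (t \ s) := disjoint_sdiff_sdiff
  have h1 := Finset.card_sdiff_add_card_inter s t
  have h2 := Finset.card_sdiff_add_card_inter t s
  rw [Finset.inter_comm] at h2
  rw [h, Finset.card_union_of_disjoint hd]
  omega

theorem stmt10 {U : Type*} [Fintype U] [DecidableEq U]
    (O E : Finset (Finset U)) (So : Finset U) (hSo : So ∈ O) :
    (∀ T : Finset U,
        ((∀ S ∈ O, Odd (T ∩ S).card) ∧ (∀ S ∈ E, Even (T ∩ S).card)) ↔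
          (∀ S ∈ O ∪ E.image (fun S => symmDiff S So), Odd (T ∩ S).card)) ∧
    sInf {k : ℕ | ∃ T : Finset U,
        ((∀ S ∈ O, Odd (T ∩ S).card) ∧ (∀ S ∈ E, Even (T ∩ S).card)) ∧ T.card = k} =
      sInf {k : ℕ | ∃ T : Finset U,
        (∀ S ∈ O ∪ E.image (fun S => symmDiff S So), Odd (T ∩ S).card) ∧ T.card = k} := by
  have key : ∀ T S : Finset U,
      (T ∩ symmDiff S So).card % 2 = ((T ∩ S).card + (T ∩ So).card) % 2 := by
    intro T S
    have : T ∩ symmDiff S So = symmDiff (T ∩ S) (T ∩ So) := by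
      ext x; simp [symmDiff_def, Finset.mem_union, Finset.mem_sdiff]; tauto
    rw [this, symmDiff_card_par]
  have main : ∀ T : Finset U,
      ((∀ S ∈ O, Odd (T ∩ S).card) ∧ (∀ S ∈ E, Even (T ∩ S).card)) ↔
        (∀ S ∈ O ∪ E.image (fun S => symmDiff S So), Odd (T ∩ S).card) := by
    intro T
    constructor
    · rintro ⟨hO, hE⟩ S hS
      rcases Finset.mem_union.1 hS with h | h
      · exact hO S h
      · rcases Finset.mem_image.1 h with ⟨S', hS', rfl⟩
        have h1 := hE S' hS'
        have h2 := hO So hSo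
        have := key T S'
        rw [Nat.odd_iff] at h2 ⊢
        rw [Nat.even_iff] at h1
        omega
    · intro h
      have hOdd : ∀ S ∈ O, Odd (T ∩ S).card := fun S hS =>
        h S (Finset.mem_union_left _ hS)
      refine ⟨hOdd, fun S hS => ?_⟩
      have h1 := h (symmDiff S So) (Finset.mem_union_right _
        (Finset.mem_image.2 ⟨S, hS, rfl⟩))
      have h2 := hOdd So hSo
      have := key T S
      rw [Nat.odd_iff] at h1 h2
      rw [Nat.even_iff]
      omega
  refine ⟨main, ?_⟩
  congr 1
  ext k
  simp only [Set.mem_setOf_eq]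
  constructor
  · rintro ⟨T, hT, rfl⟩; exact ⟨T, (main T).1 hT, rfl⟩
  · rintro ⟨T, hT, rfl⟩; exact ⟨T, (main T).2 hT, rfl⟩
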